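/- If P is a semidihedral 2-group, then the faithful part ∂B^×(P) of the unit group of its Burnside ring is trivial. -/
import Mathlib

/-- The number of `K`-fixed points on the coset space `G ⧸ H`. -/
noncomputable def fixedCard {G : Type} [Group G] (H K : Subgroup G) : ℤ :=
  (Nat.card {x : G ⧸ H // ∀ k ∈ K, k • x = x} : ℤ)

/-- An abstract model of the Burnside ring of `G`, given by its canonical basis
`bas H = [G/H]` and the mark (fixed-point) ring homomorphisms, which are jointly
injective, and whose images of the basis elements are the tables of marks. -/
structure BurnsideModel (G : Type) [Group G] [Fintype G] where
  carrier : Type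
  [ring : CommRing carrier]
  mark : Subgroup G → carrier →+* ℤ
  bas : Subgroup G → carrier
  mark_bas : ∀ K H : Subgroup G, mark K (bas H) = fixedCard H K
  mark_injective : ∀ a b : carrier, (∀ H, mark H a = mark H b) → a = b
  bas_span : ∀ a : carrier, a ∈ Submodule.span ℤ (Set.range bas)

attribute [instance] BurnsideModel.ring

/-- `fixedCard H (zpowers g)` counts the fixed points of the element `g` on `G ⧸ H`. -/
lemma fixedCard_zpowers {P : Type} [Group P] (H : Subgroup P) (g : P) :
    fixedCard H (Subgroup.zpowers g) = (Nat.card (MulAction.fixedBy (P ⧸ H) g) : ℤ) := by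
  unfold fixedCard
  congr 1
  apply Nat.card_congr
  apply Equiv.subtypeEquivRight
  intro x
  constructor
  · intro h
    exact h g (Subgroup.mem_zpowers g)
  · intro h k hk
    have hg : g ∈ MulAction.stabilizer P x := h
    exact (Subgroup.zpowers_le.mpr hg) hk

/-- Burnside's lemma applied to the (transitive) coset action on `G ⧸ H`. -/
lemma sum_fixedCard {P : Type} [Group P] [Fintype P] (H : Subgroup P) :
    ∑ g : P, fixedCard H (Subgroup.zpowers g) = (Fintype.card P : ℤ) := by
  classical
  haveI : Fintype (P ⧸ H) := Fintype.ofFinite _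
  haveI : ∀ g : P, Fintype (MulAction.fixedBy (P ⧸ H) g) := fun g => Fintype.ofFinite _
  haveI : Fintype (MulAction.orbitRel.Quotient P (P ⧸ H)) := Fintype.ofFinite _
  have hb := MulAction.sum_card_fixedBy_eq_card_orbits_mul_card_group P (P ⧸ H)
  haveI hss : Subsingleton (MulAction.orbitRel.Quotient P (P ⧸ H)) :=
    (MulAction.pretransitive_iff_subsingleton_quotient P (P ⧸ H)).mp inferInstance
  haveI hne : Nonempty (MulAction.orbitRel.Quotient P (P ⧸ H)) :=
    ⟨Quotient.mk _ ((1 : P) : P ⧸ H)⟩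
  have h1 : Fintype.card (MulAction.orbitRel.Quotient P (P ⧸ H)) = 1 := by
    have hle := Fintype.card_le_one_iff_subsingleton.mpr hss
    have hpos := Fintype.card_pos (α := MulAction.orbitRel.Quotient P (P ⧸ H))
    omega
  rw [h1, one_mul] at hb
  calc ∑ g : P, fixedCard H (Subgroup.zpowers g)
      = ∑ g : P, (Nat.card (MulAction.fixedBy (P ⧸ H) g) : ℤ) := by
        exact Finset.sum_congr rfl fun g _ => fixedCard_zpowers H g
    _ = ((∑ g : P, Fintype.card (MulAction.fixedBy (P ⧸ H) g) : ℕ) : ℤ) := by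
        push_cast [Nat.card_eq_fintype_card]; rfl
    _ = (Fintype.card P : ℤ) := by rw [hb]

/-- If `P` is a semidihedral `2`-group
`⟨r, s : r^(2^(n-1)) = s² = 1, s r s = r^(2^(n-2) - 1)⟩` (with `n ≥ 4`), then the
faithful part `∂B^×(P)` of the unit group of its Burnside ring is trivial. -/
theorem stmt9 {P : Type} [Group P] [Fintype P]
    (n : ℕ) (hn : 4 ≤ n) (hcard : Fintype.card P = 2 ^ n)
    (r s : P) (hr : orderOf r = 2 ^ (n - 1))
    (hs2 : s ^ 2 = 1) (hs1 : s ≠ 1)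
    (hsrs : s * r * s = r ^ (2 ^ (n - 2) - 1))
    (hgen : Subgroup.closure {r, s} = ⊤)
    (M : BurnsideModel P) (a : M.carrier) (ha : IsUnit a)
    (hfa : ∀ N : Subgroup P, N.Normal → N ≠ ⊥ → ∀ H : Subgroup P, N ≤ H → M.mark H a = 1) :
    a = 1 := by
  classical
  set m : ℕ := 2 ^ (n - 2) with hm
  have hm4 : 4 ≤ m := by
    calc (4:ℕ) = 2 ^ 2 := by norm_num
    _ ≤ 2 ^ (n-2) := Nat.pow_le_pow_right (by norm_num) (by omega)
  have e1 : 2 ^ (n - 1) = 2 * m := by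
    rw [hm, ← pow_succ']
    congr 1
    omega
  have hss : s * s = 1 := by rw [← sq]; exact hs2
  have sinv : s⁻¹ = s := inv_eq_of_mul_eq_one_right hss
  have hrpow : ∀ j : ℕ, r ^ j = 1 ↔ 2 ^ (n-1) ∣ j := by
    intro j
    rw [← hr, ← orderOf_dvd_iff_pow_eq_one]
  have hr1 : r ^ (2 ^ (n-1)) = 1 := (hrpow _).mpr dvd_rfl
  set z : P := r ^ m with hzdef
  have hz2 : z * z = 1 := by
    rw [hzdef, ← pow_add, hrpow, e1]
    exact ⟨1, by ring⟩
  have hz2' : z ^ 2 = 1 := by rw [sq]; exact hz2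
  have hz1 : z ≠ 1 := by
    intro h
    rw [hzdef] at h
    have hdvd := (hrpow m).mp h
    have := Nat.le_of_dvd (by positivity) hdvd
    have h1 : 2 ^ (n-2) < 2 ^ (n-1) := Nat.pow_lt_pow_right (by norm_num) (by omega)
    omega
  have zinv : z⁻¹ = z := inv_eq_of_mul_eq_one_right hz2
  -- conjugation formula
  have hconj : ∀ i : ℕ, s * r ^ i * s = r ^ ((m - 1) * i) := by
    intro i
    have h := conj_pow (i := i) (a := s) (b := r)
    rw [sinv] at h
    rw [← h, hsrs, ← pow_mul]
  have hsq : ∀ i : ℕ, (s * r ^ i) * (s * r ^ i) = r ^ (m * i) := by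
    intro i
    have h2 : (s * r ^ i) * (s * r ^ i) = (s * r ^ i * s) * r ^ i := by group
    rw [h2, hconj, ← pow_add]
    congr 1
    rw [Nat.sub_one_mul, Nat.sub_add_cancel (Nat.le_mul_of_pos_left _ (by omega))]
  -- z is central
  have hszs : s * z * s = z := by
    have h := hconj m
    have hmm : (m - 1) * m + m = 2 ^ (n-1) * 2 ^ (n-3) := by
      rw [Nat.sub_one_mul, Nat.sub_add_cancel (Nat.le_mul_of_pos_left _ (by omega))]
      rw [hm, ← pow_add, ← pow_add]
      congr 1
      omega
    have h3 : (s * z * s) * z = 1 := by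
      rw [hzdef, h, ← pow_add, hmm, pow_mul, hr1, one_pow]
    have h4 : s * z * s = z⁻¹ := eq_inv_of_mul_eq_one_left h3
    rw [h4, zinv]
  have hsz : s * z = z * s := by
    calc s * z = (s * z * s) * s⁻¹ := by group
    _ = z * s := by rw [hszs, sinv]
  -- the cyclic subgroup generated by r has index 2
  set R : Subgroup P := Subgroup.zpowers r with hR
  have hmemR : ∀ g : P, g ∈ R → ∃ i : ℕ, i < 2 ^ (n-1) ∧ g = r ^ i := by
    intro g hg
    have hfin : IsOfFinOrder r := by
      rw [← orderOf_pos_iff, hr]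
      positivity
    obtain ⟨i, hi⟩ := (Submonoid.mem_powers_iff g r).mp (hfin.mem_powers_iff_mem_zpowers.mpr hg)
    refine ⟨i % 2 ^ (n-1), Nat.mod_lt _ (by positivity), ?_⟩
    rw [← hi, ← hr, pow_mod_orderOf]
  have hpowR : ∀ i : ℕ, r ^ i ∈ R := fun i => Subgroup.pow_mem _ (Subgroup.mem_zpowers r) i
  have hsR : s ∉ R := by
    intro hs
    obtain ⟨k, hk⟩ := Subgroup.mem_zpowers_iff.mp hs
    have hc : Commute r s := by rw [← hk]; exact (Commute.refl r).zpow_right k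
    have h1 : s * r * s = r := by
      rw [← hc.eq, mul_assoc, hss, mul_one]
    rw [hsrs] at h1
    have h2 : r ^ (m - 1) = r ^ 1 := by rw [pow_one]; exact h1
    have h3 : (m - 1) % 2 ^ (n-1) = 1 % 2 ^ (n-1) := by
      rw [← hr]; exact pow_inj_mod.mp h2
    rw [Nat.mod_eq_of_lt (by omega), Nat.mod_eq_of_lt (by omega)] at h3
    omega
  have hRindex : R.index = 2 := by
    have h1 : Nat.card R * R.index = Nat.card P := Subgroup.card_mul_index R
    have h2 : Nat.card R = 2 ^ (n-1) := by
      rw [hR, Nat.card_zpowers, hr]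
    have h3 : Nat.card P = 2 ^ n := by rw [Nat.card_eq_fintype_card, hcard]
    have h4 : (2:ℕ) ^ n = 2 ^ (n-1) * 2 := by
      rw [← pow_succ]; congr 1; omega
    rw [h2, h3, h4] at h1
    exact Nat.eq_of_mul_eq_mul_left (by positivity) h1
  have hdecomp : ∀ g : P, (∃ i : ℕ, i < 2 ^ (n-1) ∧ g = r ^ i) ∨
      (∃ i : ℕ, i < 2 ^ (n-1) ∧ g = s * r ^ i) := by
    intro g
    by_cases hg : g ∈ R
    · exact Or.inl (hmemR g hg)
    · right
      have hsg : s * g ∈ R := by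
        rw [Subgroup.mul_mem_iff_of_index_two hRindex]
        simp [hsR, hg]
      obtain ⟨i, hi, hieq⟩ := hmemR _ hsg
      refine ⟨i, hi, ?_⟩
      rw [← hieq, ← mul_assoc, hss, one_mul]
  have hzc : ∀ g : P, z * g = g * z := by
    have hzr : ∀ i : ℕ, z * r ^ i = r ^ i * z := by
      intro i
      rw [hzdef, ← pow_add, ← pow_add, Nat.add_comm]
    intro g
    rcases hdecomp g with ⟨i, _, rfl⟩ | ⟨i, _, rfl⟩
    · exact hzr i
    · calc z * (s * r ^ i) = (z * s) * r ^ i := by rw [mul_assoc]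
      _ = (s * z) * r ^ i := by rw [hsz]
      _ = s * (z * r ^ i) := by rw [mul_assoc]
      _ = s * (r ^ i * z) := by rw [hzr]
      _ = (s * r ^ i) * z := by rw [mul_assoc]
  -- z is the unique involution in <r>
  have hinvol : ∀ j : ℕ, r ^ j ≠ 1 → r ^ j * r ^ j = 1 → r ^ j = z := by
    intro j hne hsq1
    rw [← pow_add, hrpow, e1] at hsq1
    have hmj : m ∣ j := by
      have : 2 * m ∣ 2 * j := by
        obtain ⟨c, hc⟩ := hsq1
        exact ⟨c, by omega⟩
      exact (Nat.mul_dvd_mul_iff_left (by norm_num : 0 < 2)).mp this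
    obtain ⟨c, rfl⟩ := hmj
    rw [pow_mul] at hne ⊢
    rcases Nat.even_or_odd c with ⟨c2, rfl⟩ | ⟨c2, hc2⟩
    · exfalso
      apply hne
      rw [← two_mul, pow_mul, hz2', one_pow]
    · rw [hc2, pow_add, pow_mul, hz2', one_pow, pow_one, one_mul]
  -- every nontrivial element of <r> has z among its powers
  have hrcase : ∀ g : P, g ∈ R → g ≠ 1 → z ∈ Subgroup.zpowers g := by
    intro g hg hne
    obtain ⟨i, _, rfl⟩ := hmemR g hg
    have hd : orderOf (r ^ i) ∣ 2 ^ n := by rw [← hcard]; exact orderOf_dvd_card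
    obtain ⟨k, hkn, hdk⟩ := (Nat.dvd_prime_pow Nat.prime_two).mp hd
    have hk0 : k ≠ 0 := by
      rintro rfl
      rw [pow_zero] at hdk
      exact hne (orderOf_eq_one_iff.mp hdk)
    have hu2 : r ^ (i * 2 ^ (k-1)) * r ^ (i * 2 ^ (k-1)) = 1 := by
      rw [← pow_add]
      have he : i * 2 ^ (k-1) + i * 2 ^ (k-1) = i * 2 ^ k := by
        rw [← Nat.mul_add, ← two_mul, ← pow_succ']
        congr 2
        omega
      rw [he, pow_mul, ← hdk]
      exact pow_orderOf_eq_one _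
    have hu1 : r ^ (i * 2 ^ (k-1)) ≠ 1 := by
      rw [pow_mul]
      intro h
      have hdvd : orderOf (r ^ i) ∣ 2 ^ (k-1) := orderOf_dvd_of_pow_eq_one h
      rw [hdk] at hdvd
      have := (Nat.pow_dvd_pow_iff_le_right (by norm_num : 1 < 2)).mp hdvd
      omega
    have huz : r ^ (i * 2 ^ (k-1)) = z := hinvol _ hu1 hu2
    exact Subgroup.mem_zpowers_iff.mpr
      ⟨(2 ^ (k-1) : ℕ), by rw [zpow_natCast, ← pow_mul]; exact huz⟩
  -- classification of elements whose cyclic subgroup avoids z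
  have hclassify : ∀ g : P, z ∈ Subgroup.zpowers g ∨ g = 1 ∨
      ∃ j : ℕ, j < 2 ^ (n-2) ∧ g = s * r ^ (2 * j) := by
    intro g
    rcases hdecomp g with ⟨i, hi, rfl⟩ | ⟨i, hi, rfl⟩
    · by_cases h1 : r ^ i = 1
      · exact Or.inr (Or.inl h1)
      · exact Or.inl (hrcase _ (hpowR i) h1)
    · rcases Nat.even_or_odd i with ⟨j, rfl⟩ | ⟨j, hj⟩
      · refine Or.inr (Or.inr ⟨j, by omega, by rw [two_mul]⟩)
      · left
        have hgg : (s * r ^ i) * (s * r ^ i) = z := by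
          rw [hsq i, hj, Nat.mul_add, Nat.mul_one, ← Nat.mul_assoc,
            Nat.mul_comm m 2, ← e1, pow_add, pow_mul, hr1, one_pow, one_mul, ← hzdef]
        exact Subgroup.mem_zpowers_iff.mpr
          ⟨(2 : ℕ), by rw [zpow_natCast, sq]; exact hgg⟩
  -- the set of elements whose cyclic subgroup misses z
  set badset : Finset P :=
    insert 1 ((Finset.range (2 ^ (n-2))).image fun j => s * r ^ (2 * j)) with hbadset
  have hbadcard : badset.card ≤ 2 ^ (n-2) + 1 := by
    have h1 := Finset.card_insert_le (1:P)
      ((Finset.range (2 ^ (n-2))).image fun j => s * r ^ (2 * j))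
    have h2 := Finset.card_image_le (s := Finset.range (2 ^ (n-2)))
      (f := fun j => s * r ^ (2 * j))
    rw [Finset.card_range] at h2
    rw [hbadset]
    omega
  have hbadmem : ∀ g : P, z ∉ Subgroup.zpowers g → g ∈ badset := by
    intro g hg
    rcases hclassify g with h | h | ⟨j, hj, rfl⟩
    · exact absurd h hg
    · rw [h]; exact Finset.mem_insert_self _ _
    · exact Finset.mem_insert_of_mem (Finset.mem_image.mpr ⟨j, Finset.mem_range.mpr hj, rfl⟩)
  -- the subgroup generated by z is normal and nontrivial
  have hNnormal : (Subgroup.zpowers z).Normal := by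
    constructor
    intro x hx g
    obtain ⟨k, hk⟩ := Subgroup.mem_zpowers_iff.mp hx
    have hcomm : x * g = g * x := by
      rw [← hk]
      exact ((Commute.zpow_left (hzc g) k)).eq
    have : g * x * g⁻¹ = x := by rw [← hcomm, mul_assoc, mul_inv_cancel, mul_one]
    rw [this]
    exact hx
  have hmark1 : ∀ H : Subgroup P, z ∈ H → M.mark H a = 1 := by
    intro H hzH
    exact hfa (Subgroup.zpowers z) hNnormal
      (by simpa [Subgroup.zpowers_eq_bot] using hz1) H (Subgroup.zpowers_le.mpr hzH)
  have hpm : ∀ H : Subgroup P, M.mark H a = 1 ∨ M.mark H a = -1 := fun H =>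
    Int.isUnit_iff.mp (ha.map (M.mark H))
  -- divisibility of the total sum of marks on cyclic subgroups
  have hkey : ∀ H : Subgroup P, ∑ g : P, fixedCard H (Subgroup.zpowers g) = (2 ^ n : ℤ) := by
    intro H
    rw [sum_fixedCard H, hcard]
    push_cast
    ring
  have hdvd : ((2:ℤ) ^ n) ∣ ∑ g : P, M.mark (Subgroup.zpowers g) a := by
    refine Submodule.span_induction
      (p := fun x _ => ((2:ℤ)^n) ∣ ∑ g : P, M.mark (Subgroup.zpowers g) x)
      ?_ ?_ ?_ ?_ (M.bas_span a)
    · rintro x ⟨H, rfl⟩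
      simp only [M.mark_bas]
      rw [hkey H]
    · simp
    · intro x y hx hy ihx ihy
      simp only [map_add, Finset.sum_add_distrib]
      exact dvd_add ihx ihy
    · intro c x hx ih
      have hc : ∀ K : Subgroup P, M.mark K (c • x) = c * M.mark K x := by
        intro K
        rw [map_zsmul, smul_eq_mul]
      simp only [hc, ← Finset.mul_sum]
      exact Dvd.dvd.mul_left ih c
  set f : P → ℤ := fun g => M.mark (Subgroup.zpowers g) a with hf
  have hfle : ∀ g : P, f g ≤ 1 := by
    intro g
    rcases hpm (Subgroup.zpowers g) with h | h <;> simp [hf, h]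
  have hflb : ∀ g : P, (-1:ℤ) ≤ f g := by
    intro g
    rcases hpm (Subgroup.zpowers g) with h | h <;> simp [hf, h]
  have hgood : ∀ g : P, g ∉ badset → f g = 1 := by
    intro g hg
    apply hmark1
    by_contra hz
    exact hg (hbadmem g hz)
  have hsplit : (∑ g ∈ Finset.univ \ badset, f g) + ∑ g ∈ badset, f g = ∑ g : P, f g :=
    Finset.sum_sdiff (Finset.subset_univ badset)
  have hsum1 : ∑ g ∈ Finset.univ \ badset, f g = ((Finset.univ \ badset).card : ℤ) := by
    rw [Finset.sum_congr rfl (fun g hg => hgood g (Finset.mem_sdiff.mp hg).2)]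
    simp
  have hsum2 : -(badset.card : ℤ) ≤ ∑ g ∈ badset, f g := by
    have h := Finset.sum_le_sum (s := badset) (f := fun _ => (-1:ℤ)) (g := f)
      (fun i _ => hflb i)
    simpa using h
  have hcard1 : ((Finset.univ \ badset).card : ℤ) = 2 ^ n - badset.card := by
    rw [Finset.card_sdiff_of_subset (Finset.subset_univ badset)]
    have hle : badset.card ≤ Finset.univ.card := Finset.card_le_card (Finset.subset_univ _)
    rw [Nat.cast_sub hle, Finset.card_univ, hcard]
    push_cast
    ring
  have hSub : ∑ g : P, f g ≤ 2 ^ n := by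
    have h := Finset.sum_le_sum (s := Finset.univ) (f := f) (g := fun _ => (1:ℤ))
      (fun i _ => hfle i)
    simpa [Finset.card_univ, hcard] using h
  have hSpos : 0 < ∑ g : P, f g := by
    have hb : (badset.card : ℤ) ≤ 2 ^ (n-2) + 1 := by exact_mod_cast hbadcard
    have h2 : (2:ℤ) ^ n = 2 * 2 ^ (n-1) := by
      rw [← pow_succ']
      congr 1
      omega
    have h3 : (2:ℤ) ^ (n-1) = 2 * 2 ^ (n-2) := by
      rw [← pow_succ']
      congr 1
      omega
    have h4 : (2:ℤ) ≤ 2 ^ (n-2) := by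
      calc (2:ℤ) = 2 ^ 1 := by norm_num
      _ ≤ 2 ^ (n-2) := pow_le_pow_right₀ (by norm_num) (by omega)
    have hlow : (2:ℤ) ^ n - badset.card + -(badset.card : ℤ) ≤ ∑ g : P, f g := by
      rw [← hsplit]
      linarith [hsum2, hsum1, hcard1]
    linarith
  have hSeq : ∑ g : P, f g = 2 ^ n := le_antisymm hSub (Int.le_of_dvd hSpos hdvd)
  have hall : ∀ g : P, f g = 1 := by
    have hsum : ∑ g : P, f g = ∑ _g : P, (1:ℤ) := by
      rw [hSeq, Finset.sum_const, Finset.card_univ, hcard]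
      push_cast
      ring
    have h := (Finset.sum_eq_sum_iff_of_le (fun i _ => hfle i)).mp hsum
    intro g
    exact h g (Finset.mem_univ g)
  -- every subgroup avoiding z is cyclic
  have hfinal : ∀ H : Subgroup P, M.mark H a = 1 := by
    intro H
    by_cases hzH : z ∈ H
    · exact hmark1 H hzH
    by_cases htriv : ∀ h ∈ H, h = (1:P)
    · have hHbot : H = ⊥ := by
        rw [eq_bot_iff]
        intro h hh
        rw [Subgroup.mem_bot]
        exact htriv h hh
      rw [hHbot, ← Subgroup.zpowers_one_eq_bot]
      exact hall 1
    push_neg at htriv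
    obtain ⟨g, hgH, hg1⟩ := htriv
    have hzg : ∀ h : P, h ∈ H → z ∉ Subgroup.zpowers h := fun h hh hz =>
      hzH ((Subgroup.zpowers_le.mpr hh) hz)
    have hform : ∀ h : P, h ∈ H → h ≠ 1 → ∃ j : ℕ, h = s * r ^ (2 * j) := by
      intro h hh hne
      rcases hclassify h with hc | hc | ⟨j, _, rfl⟩
      · exact absurd hc (hzg h hh)
      · exact absurd hc hne
      · exact ⟨j, rfl⟩
    obtain ⟨j, rfl⟩ := hform g hgH hg1
    have hgsq : (s * r ^ (2*j)) * (s * r ^ (2*j)) = 1 := by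
      have hme : m * (2*j) = 2 ^ (n-1) * j := by rw [e1]; ring
      rw [hsq, hme, pow_mul, hr1, one_pow]
    have honly : ∀ h ∈ H, h = 1 ∨ h = s * r ^ (2*j) := by
      intro h hh
      by_contra hc
      push_neg at hc
      obtain ⟨hne1, hneg⟩ := hc
      obtain ⟨j', rfl⟩ := hform h hh hne1
      have hprod : (s * r ^ (2*j)) * (s * r ^ (2*j')) = r ^ ((m-1)*(2*j) + 2*j') := by
        calc (s * r^(2*j)) * (s * r^(2*j'))
            = (s * r^(2*j) * s) * r^(2*j') := by group
        _ = r ^ ((m-1)*(2*j)) * r^(2*j') := by rw [hconj]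
        _ = _ := by rw [← pow_add]
      have hprodH : (s * r^(2*j)) * (s * r^(2*j')) ∈ H := H.mul_mem hgH hh
      have hprodne : (s * r^(2*j)) * (s * r^(2*j')) ≠ 1 := by
        intro h1
        apply hneg
        have hginv : (s * r^(2*j))⁻¹ = s * r^(2*j) := inv_eq_of_mul_eq_one_right hgsq
        calc s * r^(2*j') = (s * r^(2*j))⁻¹ * ((s * r^(2*j)) * (s * r^(2*j'))) := by group
        _ = (s * r^(2*j))⁻¹ := by rw [h1, mul_one]
        _ = s * r^(2*j) := hginv
      have hzp : z ∈ Subgroup.zpowers ((s * r^(2*j)) * (s * r^(2*j'))) := by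
        rw [hprod]
        exact hrcase _ (hpowR _) (hprod ▸ hprodne)
      exact (hzg _ hprodH) hzp
    have hHeq : H = Subgroup.zpowers (s * r ^ (2*j)) := by
      apply le_antisymm
      · intro h hh
        rcases honly h hh with rfl | rfl
        · exact Subgroup.one_mem _
        · exact Subgroup.mem_zpowers _
      · exact Subgroup.zpowers_le.mpr hgH
    rw [hHeq]
    exact hall _
  apply M.mark_injective
  intro H
  rw [map_one]
  exact hfinal H
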